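/- arXiv:2407.20035 — 4 statements merged into one kernel-verified Lean document; each statement's English description precedes it below -/
import Mathlib

section
/- If w is a bounded smooth solution of Δw - (1/2) y·∇w - w/(p-1) + |w|^{p-1}w = 0 on ℝ^n with w, ∇w, ∇²w bounded and all integrals against the Gaussian weight ρ(y) = (4π)^{-n/2} e^{-|y|²/4} finite, then ∫ |∇w|² ρ dy + (1/(p-1)) ∫ w² ρ dy = ∫ |w|^{p+1} ρ dy. -/
open MeasureTheory Real

noncomputable def lap {n : ℕ} (w : EuclideanSpace ℝ (Fin n) → ℝ)
    (y : EuclideanSpace ℝ (Fin n)) : ℝ :=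
  ∑ i, fderiv ℝ (fun z => fderiv ℝ w z (EuclideanSpace.single i 1)) y
      (EuclideanSpace.single i 1)

/-- The Gaussian weight `ρ(y) = (4π)^{-n/2} e^{-|y|²/4}`. -/
noncomputable def rho (n : ℕ) (y : EuclideanSpace ℝ (Fin n)) : ℝ :=
  (4 * Real.pi) ^ (-(n : ℝ) / 2) * Real.exp (-‖y‖ ^ 2 / 4)

section Helpers

open Filter Topology

variable {n : ℕ}

lemma rho_pos (y : EuclideanSpace ℝ (Fin n)) : 0 < rho n y := by
  unfold rho; positivity

lemma gauss_integrable {a : ℝ} (ha : 0 < a) :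
    Integrable (fun x : EuclideanSpace ℝ (Fin n) => Real.exp (-a * ‖x‖ ^ 2)) := by
  have h := (GaussianFourier.integrable_cexp_neg_mul_sq_norm_add
      (b := (a : ℂ)) (by simpa using ha) (0 : ℂ) (0 : EuclideanSpace ℝ (Fin n))).norm
  apply h.congr
  filter_upwards with x
  rw [Complex.norm_exp]
  norm_num
  left
  norm_cast

lemma hasFDerivAt_gauss (c : ℝ) (y : EuclideanSpace ℝ (Fin n)) :
    HasFDerivAt (fun x : EuclideanSpace ℝ (Fin n) => c * Real.exp ((-(1/4) : ℝ) * ‖x‖ ^ 2))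
      ((-(c * Real.exp ((-(1/4) : ℝ) * ‖y‖ ^ 2)) / 2) • (innerSL ℝ y)) y := by
  have h1 : HasFDerivAt (fun x : EuclideanSpace ℝ (Fin n) => ‖x‖ ^ 2)
      (2 • (innerSL ℝ y)) y := (hasStrictFDerivAt_norm_sq y).hasFDerivAt
  have h2 := h1.const_mul ((-(1/4)) : ℝ)
  have h3 := (Real.hasDerivAt_exp ((-(1/4)) * ‖y‖ ^ 2)).comp_hasFDerivAt y h2
  have h4 := h3.const_mul c
  refine h4.congr_fderiv ?_
  ext v
  simp only [ContinuousLinearMap.smul_apply, smul_eq_mul, Function.comp]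
  ring

lemma rho_eq : rho n = fun x : EuclideanSpace ℝ (Fin n) =>
    (4 * Real.pi) ^ (-(n : ℝ) / 2) * Real.exp ((-(1/4) : ℝ) * ‖x‖ ^ 2) := by
  funext x; unfold rho; congr 1; ring

lemma hasFDerivAt_rho (y : EuclideanSpace ℝ (Fin n)) :
    HasFDerivAt (rho n) ((-(rho n y) / 2) • (innerSL ℝ y)) y := by
  rw [rho_eq]
  exact hasFDerivAt_gauss _ y

lemma rho_integrable : Integrable (fun x : EuclideanSpace ℝ (Fin n) => rho n x) := by
  rw [rho_eq]
  exact (gauss_integrable (by norm_num : (0:ℝ) < 1/4)).const_mul _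

lemma rho_continuous : Continuous (rho n) := by
  have : Differentiable ℝ (rho n) := fun z => (hasFDerivAt_rho z).differentiableAt
  exact this.continuous

lemma clm_apply_eq_sum (f : EuclideanSpace ℝ (Fin n) →L[ℝ] ℝ) (x : EuclideanSpace ℝ (Fin n)) :
    f x = ∑ i, (x i) * f (EuclideanSpace.single i 1) := by
  set g := (InnerProductSpace.toDual ℝ (EuclideanSpace ℝ (Fin n))).symm f with hg
  have hfg : ∀ v, (inner ℝ g v : ℝ) = f v := fun v => InnerProductSpace.toDual_symm_apply
  have hgi : ∀ i, f (EuclideanSpace.single i 1) = g i := by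
    intro i
    rw [← hfg]
    simp [EuclideanSpace.inner_single_right]
  rw [← hfg x, PiLp.inner_apply]
  simp_rw [hgi]
  simp [mul_comm]

lemma sum_sq_apply (f : EuclideanSpace ℝ (Fin n) →L[ℝ] ℝ) :
    ∑ i, (f (EuclideanSpace.single i 1)) ^ 2 = ‖f‖ ^ 2 := by
  set g := (InnerProductSpace.toDual ℝ (EuclideanSpace ℝ (Fin n))).symm f with hg
  have hfg : ∀ v, (inner ℝ g v : ℝ) = f v := fun v => InnerProductSpace.toDual_symm_apply
  have hgi : ∀ i, f (EuclideanSpace.single i 1) = g i := by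
    intro i
    rw [← hfg]
    simp [EuclideanSpace.inner_single_right]
  have hnorm : ‖f‖ = ‖g‖ := ((InnerProductSpace.toDual ℝ _).symm.norm_map f).symm
  rw [hnorm, ← real_inner_self_eq_norm_sq, PiLp.inner_apply]
  simp_rw [hgi]
  simp [sq]

lemma inner_single_val (y : EuclideanSpace ℝ (Fin n)) (i : Fin n) :
    (innerSL ℝ y) (EuclideanSpace.single i (1:ℝ)) = y i := by
  simp [EuclideanSpace.inner_single_right]

lemma integral_fderiv_apply_eq_zero
    {F : EuclideanSpace ℝ (Fin n) → ℝ}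
    {F' : EuclideanSpace ℝ (Fin n) → EuclideanSpace ℝ (Fin n) →L[ℝ] ℝ}
    (hF : ∀ x, HasFDerivAt F (F' x) x) (v : EuclideanSpace ℝ (Fin n)) (hv : ‖v‖ ≤ 1)
    {G : EuclideanSpace ℝ (Fin n) → ℝ} (hG : Integrable G)
    (hbound : ∀ x z, ‖z - x‖ ≤ 1 → ‖F' z‖ ≤ G x)
    (hFint : Integrable F) :
    ∫ x, F' x v = 0 := by
  have hFcont : Continuous F := by
    have : Differentiable ℝ F := fun x => (hF x).differentiableAt
    exact this.continuous
  set t : ℕ → ℝ := fun k => (1 : ℝ) / (k + 1) with ht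
  have ht_pos : ∀ k, 0 < t k := fun k => by positivity
  have ht_le : ∀ k, t k ≤ 1 := fun k => by
    rw [ht]; rw [div_le_one (by positivity)]; linarith
  set φ : ℕ → EuclideanSpace ℝ (Fin n) → ℝ :=
    fun k x => (t k)⁻¹ * (F (x + (t k) • v) - F x) with hφ
  have hdiff : ∀ k x, |φ k x| ≤ G x := by
    intro k x
    have hmvt : ‖F (x + (t k) • v) - F x‖ ≤ G x * ‖(x + (t k) • v) - x‖ := by
      apply Convex.norm_image_sub_le_of_norm_hasFDerivWithin_le
        (fun z _ => (hF z).hasFDerivWithinAt)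
        (fun z hz => hbound x z (by simpa [Metric.mem_closedBall, dist_eq_norm] using hz))
        (convex_closedBall x 1)
        (Metric.mem_closedBall_self zero_le_one)
      simp only [Metric.mem_closedBall, dist_eq_norm, add_sub_cancel_left]
      calc ‖(t k) • v‖ = t k * ‖v‖ := by
            rw [norm_smul, Real.norm_eq_abs, abs_of_pos (ht_pos k)]
        _ ≤ 1 := by
            calc t k * ‖v‖ ≤ 1 * 1 :=
                  mul_le_mul (ht_le k) hv (norm_nonneg v) zero_le_one
              _ = 1 := by ring
    have hnn : ‖(t k) • v‖ ≤ t k := by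
      rw [norm_smul, Real.norm_eq_abs, abs_of_pos (ht_pos k)]
      calc t k * ‖v‖ ≤ t k * 1 := mul_le_mul_of_nonneg_left hv (ht_pos k).le
        _ = t k := by ring
    have hGnn : 0 ≤ G x := le_trans (norm_nonneg _) (hbound x x (by simp))
    rw [hφ]
    simp only [abs_mul, abs_inv, abs_of_pos (ht_pos k)]
    rw [inv_mul_le_iff₀ (ht_pos k)]
    calc |F (x + (t k) • v) - F x| ≤ G x * ‖(x + (t k) • v) - x‖ := hmvt
      _ = G x * ‖(t k) • v‖ := by rw [add_sub_cancel_left]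
      _ ≤ G x * t k := mul_le_mul_of_nonneg_left hnn hGnn
      _ = t k * G x := mul_comm _ _
  have hφint : ∀ k, ∫ x, φ k x = 0 := by
    intro k
    have h1 : Integrable (fun x => F (x + (t k) • v)) := hFint.comp_add_right _
    rw [hφ]
    simp only
    rw [integral_const_mul, integral_sub h1 hFint,
      integral_add_right_eq_self F ((t k) • v)]
    simp
  have hconv : ∀ x, Filter.Tendsto (fun k => φ k x) Filter.atTop (𝓝 (F' x v)) := by
    intro x
    have hline : HasDerivAt (fun s : ℝ => F (x + s • v)) (F' x v) 0 := by
      have h1 : HasDerivAt (fun s : ℝ => x + s • v) v 0 := by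
        simpa using ((hasDerivAt_id (0:ℝ)).smul_const v).const_add x
      have h0 : HasFDerivAt F (F' x) (x + (0:ℝ) • v) := by simpa using hF x
      have h2 := h0.comp_hasDerivAt 0 h1
      exact h2
    have hslope := hasDerivAt_iff_tendsto_slope.mp hline
    have htend : Filter.Tendsto t Filter.atTop (𝓝[≠] (0:ℝ)) := by
      apply tendsto_nhdsWithin_of_tendsto_nhds_of_eventually_within
      · exact tendsto_one_div_add_atTop_nhds_zero_nat
      · filter_upwards with k
        exact (ht_pos k).ne'
    have := hslope.comp htend
    apply this.congr
    intro k
    simp only [Function.comp, slope_def_field, φ]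
    rw [div_eq_inv_mul]
    simp
  have hmain : Filter.Tendsto (fun k => ∫ x, φ k x) Filter.atTop (𝓝 (∫ x, F' x v)) := by
    apply tendsto_integral_of_dominated_convergence G
    · intro k
      apply Continuous.aestronglyMeasurable
      exact continuous_const.mul
        ((hFcont.comp (continuous_id.add continuous_const)).sub hFcont)
    · exact hG
    · intro k
      filter_upwards with x
      exact hdiff k x
    · filter_upwards with x
      exact hconv x
  have hz : Filter.Tendsto (fun _ : ℕ => (0:ℝ)) Filter.atTop (𝓝 (∫ x, F' x v)) := by
    simpa [hφint] using hmain
  exact (tendsto_nhds_unique tendsto_const_nhds hz).symm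

end Helpers


lemma rho_decay_bound {n : ℕ} (M : ℝ) (hM0 : 0 ≤ M) (x z : EuclideanSpace ℝ (Fin n))
    (h : ‖z - x‖ ≤ 1) :
    rho n z * (M ^ 2 * (‖z‖ / 2) + 2 * M ^ 2)
      ≤ ((4 * Real.pi) ^ (-(n : ℝ) / 2) * M ^ 2 * 7 * Real.exp 1)
        * Real.exp (-(1/16) * ‖x‖ ^ 2) := by
  set c := (4 * Real.pi) ^ (-(n : ℝ) / 2) with hc
  have hcpos : 0 < c := by positivity
  set s := ‖z‖ with hs'
  set r := ‖x‖ with hr'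
  have hs : 0 ≤ s := norm_nonneg _
  have hr0 : 0 ≤ r := norm_nonneg _
  have hr : r ≤ s + 1 := by
    have h1 : ‖x‖ - ‖z‖ ≤ ‖x - z‖ := norm_sub_norm_le x z
    have h2 : ‖x - z‖ = ‖z - x‖ := norm_sub_rev x z
    rw [hr', hs']
    linarith [h.trans_eq rfl, h1, h2.symm ▸ h]
  have key : Real.exp (-s^2/4) * (M^2 * (s/2) + 2*M^2)
      ≤ (M^2*7*Real.exp 1) * Real.exp (-(1/16)*r^2) := by
    have h1 : M^2 * (s/2) + 2*M^2 ≤ M^2 * 7 * Real.exp (s^2/8) := by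
      nlinarith [Real.add_one_le_exp (s^2/8), sq_nonneg M, sq_nonneg s,
        mul_nonneg (sq_nonneg M) hs, mul_nonneg (mul_nonneg (sq_nonneg M) hs) hs]
    have h2 : Real.exp (-s^2/4) * Real.exp (s^2/8) ≤ Real.exp 1 * Real.exp (-(1/16)*r^2) := by
      rw [← Real.exp_add, ← Real.exp_add]
      apply Real.exp_le_exp.mpr
      nlinarith [hs, hr, hr0, sq_nonneg (s-1),
        mul_le_mul hr hr hr0 (by linarith : (0:ℝ) ≤ s+1)]
    calc Real.exp (-s^2/4) * (M^2 * (s/2) + 2*M^2)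
        ≤ Real.exp (-s^2/4) * (M^2 * 7 * Real.exp (s^2/8)) :=
          mul_le_mul_of_nonneg_left h1 (Real.exp_pos _).le
      _ = (M^2*7) * (Real.exp (-s^2/4) * Real.exp (s^2/8)) := by ring
      _ ≤ (M^2*7) * (Real.exp 1 * Real.exp (-(1/16)*r^2)) :=
          mul_le_mul_of_nonneg_left h2 (by positivity)
      _ = (M^2*7*Real.exp 1) * Real.exp (-(1/16)*r^2) := by ring
  calc rho n z * (M^2 * (s/2) + 2*M^2)
      = c * (Real.exp (-s^2/4) * (M^2 * (s/2) + 2*M^2)) := by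
        unfold rho; rw [← hc, ← hs']; ring
    _ ≤ c * ((M^2*7*Real.exp 1) * Real.exp (-(1/16)*r^2)) :=
        mul_le_mul_of_nonneg_left key hcpos.le
    _ = (c * M^2 * 7 * Real.exp 1) * Real.exp (-(1/16)*r^2) := by ring

set_option maxHeartbeats 1000000 in
set_option synthInstance.maxHeartbeats 400000 in
/-- Energy identity: for a bounded smooth solution of the self-similar equation,
`∫ |∇w|² ρ + (1/(p-1)) ∫ w² ρ = ∫ |w|^{p+1} ρ`. -/
theorem energy_identity
    (n : ℕ) (p : ℝ) (hp : 1 < p) (w : EuclideanSpace ℝ (Fin n) → ℝ)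
    (hsmooth : ContDiff ℝ (⊤ : ℕ∞) w)
    (hbd : ∃ M : ℝ, ∀ y, |w y| ≤ M ∧ ‖fderiv ℝ w y‖ ≤ M ∧
        ‖fderiv ℝ (fderiv ℝ w) y‖ ≤ M)
    (heq : ∀ y, lap w y - (1 / 2) * fderiv ℝ w y y - w y / (p - 1)
        + |w y| ^ (p - 1) * w y = 0)
    (hint1 : Integrable (fun y => ‖fderiv ℝ w y‖ ^ 2 * rho n y))
    (hint2 : Integrable (fun y => (w y) ^ 2 * rho n y))
    (hint3 : Integrable (fun y => |w y| ^ (p + 1) * rho n y)) :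
    (∫ y, ‖fderiv ℝ w y‖ ^ 2 * rho n y)
      + (1 / (p - 1)) * ∫ y, (w y) ^ 2 * rho n y
      = ∫ y, |w y| ^ (p + 1) * rho n y := by
  classical
  obtain ⟨M, hM⟩ := hbd
  have hM0 : 0 ≤ M := le_trans (abs_nonneg _) (hM 0).1
  set W' := fderiv ℝ w with hW'def
  have hwdiff : Differentiable ℝ w := hsmooth.differentiable (by simp)
  have hwcont : Continuous w := hwdiff.continuous
  have hW'contdiff : ContDiff ℝ (⊤ : ℕ∞) W' := hsmooth.fderiv_right (by simp)
  have hW'diff : Differentiable ℝ W' := hW'contdiff.differentiable (by simp)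
  have hW'cont : Continuous W' := hW'diff.continuous
  set W'' := fderiv ℝ W' with hW''def
  have hW''cont : Continuous W'' :=
    ((hW'contdiff.fderiv_right (m := (⊤ : ℕ∞)) (by simp)).differentiable (by simp)).continuous
  set e : Fin n → EuclideanSpace ℝ (Fin n) := fun i => EuclideanSpace.single i 1 with he
  have hne : ∀ i, ‖e i‖ = 1 := by
    intro i; rw [he]; simp only [EuclideanSpace.norm_single]; norm_num
  -- derivative of the partial derivatives
  have hu : ∀ (i : Fin n) (y : EuclideanSpace ℝ (Fin n)), HasFDerivAt (fun z => W' z (e i)) ((W'' y).flip (e i)) y := by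
    intro i y
    have h := ((hW'diff y).hasFDerivAt).clm_apply (hasFDerivAt_const (e i) y)
    simpa using h
  -- Laplacian in terms of W''
  have hlap : ∀ y, lap w y = ∑ i, W'' y (e i) (e i) := by
    intro y
    unfold lap
    apply Finset.sum_congr rfl
    intro i _
    rw [(hu i y).fderiv]
    rfl
  -- the vector field components and their derivatives
  set Φ : Fin n → EuclideanSpace ℝ (Fin n) → (EuclideanSpace ℝ (Fin n) →L[ℝ] ℝ) := fun i y =>
    (w y * (W' y (e i))) • ((-(rho n y) / 2) • innerSL ℝ y)
      + rho n y • ((w y) • ((W'' y).flip (e i)) + (W' y (e i)) • (W' y)) with hΦdef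
  have hΦ : ∀ (i : Fin n) (y : EuclideanSpace ℝ (Fin n)),
      HasFDerivAt (fun z => w z * (W' z (e i)) * rho n z) (Φ i y) y := by
    intro i y
    exact ((hwdiff y).hasFDerivAt.mul (hu i y)).mul (hasFDerivAt_rho y)
  -- value of Φ at e i
  have hΦval : ∀ (i : Fin n) (y : EuclideanSpace ℝ (Fin n)), Φ i y (e i) =
      (w y * (W' y (e i))) * (-(rho n y) / 2 * (y i))
        + rho n y * (w y * (W'' y (e i) (e i)) + (W' y (e i)) * (W' y (e i))) := by
    intro i y
    rw [hΦdef]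
    simp only [ContinuousLinearMap.add_apply, ContinuousLinearMap.smul_apply,
      ContinuousLinearMap.flip_apply, smul_eq_mul]
    rw [he]
    rw [inner_single_val]
  -- norm bound for Φ
  have hΦnorm : ∀ (i : Fin n) (z : EuclideanSpace ℝ (Fin n)),
      ‖Φ i z‖ ≤ rho n z * (M ^ 2 * (‖z‖ / 2) + 2 * M ^ 2) := by
    intro i z
    have hw := (hM z).1
    have hW1 := (hM z).2.1
    have hW2 := (hM z).2.2
    have hu' : |W' z (e i)| ≤ M := by
      calc |W' z (e i)| = ‖W' z (e i)‖ := rfl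
        _ ≤ ‖W' z‖ * ‖e i‖ := (W' z).le_opNorm _
        _ = ‖W' z‖ := by rw [hne i, mul_one]
        _ ≤ M := hW1
    have hflip : ‖(W'' z).flip (e i)‖ ≤ M := by
      calc ‖(W'' z).flip (e i)‖ ≤ ‖(W'' z).flip‖ * ‖e i‖ := (W'' z).flip.le_opNorm _
        _ = ‖W'' z‖ := by rw [ContinuousLinearMap.opNorm_flip, hne i, mul_one]
        _ ≤ M := hW2
    have hρ := rho_pos z
    rw [hΦdef]
    calc ‖(w z * (W' z (e i))) • ((-(rho n z) / 2) • innerSL ℝ z)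
          + rho n z • ((w z) • ((W'' z).flip (e i)) + (W' z (e i)) • (W' z))‖
        ≤ ‖(w z * (W' z (e i))) • ((-(rho n z) / 2) • innerSL ℝ z)‖
          + ‖rho n z • ((w z) • ((W'' z).flip (e i)) + (W' z (e i)) • (W' z))‖ :=
          norm_add_le _ _
      _ ≤ |w z * (W' z (e i))| * (|(-(rho n z) / 2)| * ‖z‖)
          + |rho n z| * (|w z| * ‖(W'' z).flip (e i)‖ + |W' z (e i)| * ‖W' z‖) := by
          apply add_le_add
          · apply le_of_eq
            rw [norm_smul (x := ((-(rho n z) / 2) • innerSL ℝ z)),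
              norm_smul (x := innerSL ℝ z), innerSL_apply_norm]
            simp only [Real.norm_eq_abs]
          · rw [norm_smul (x := ((w z) • ((W'' z).flip (e i)) + (W' z (e i)) • (W' z)))]
            simp only [Real.norm_eq_abs]
            apply mul_le_mul_of_nonneg_left _ (abs_nonneg _)
            calc ‖(w z) • ((W'' z).flip (e i)) + (W' z (e i)) • (W' z)‖
                ≤ ‖(w z) • ((W'' z).flip (e i))‖ + ‖(W' z (e i)) • (W' z)‖ := norm_add_le _ _
              _ = |w z| * ‖(W'' z).flip (e i)‖ + |W' z (e i)| * ‖W' z‖ := by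
                  rw [norm_smul (x := (W'' z).flip (e i)), norm_smul (x := W' z)]
                  simp only [Real.norm_eq_abs]
      _ ≤ rho n z * (M ^ 2 * (‖z‖ / 2) + 2 * M ^ 2) := by
          have habs : |(-(rho n z) / 2)| = rho n z / 2 := by
            rw [abs_div, abs_neg, abs_of_pos hρ]
            norm_num
          have habs2 : |rho n z| = rho n z := abs_of_pos hρ
          have h1 : |w z| * |W' z (e i)| ≤ M ^ 2 := by
            nlinarith [abs_nonneg (w z), abs_nonneg ((W' z) (e i))]
          have h2 : |w z| * ‖(W'' z).flip (e i)‖ ≤ M ^ 2 := by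
            nlinarith [abs_nonneg (w z), norm_nonneg ((W'' z).flip (e i))]
          have h3 : |W' z (e i)| * ‖W' z‖ ≤ M ^ 2 := by
            nlinarith [abs_nonneg ((W' z) (e i)), norm_nonneg (W' z)]
          calc |w z * (W' z (e i))| * (|(-(rho n z) / 2)| * ‖z‖)
              + |rho n z| * (|w z| * ‖(W'' z).flip (e i)‖ + |W' z (e i)| * ‖W' z‖)
              = rho n z * ((|w z| * |W' z (e i)|) * (‖z‖ / 2)
                + ((|w z| * ‖(W'' z).flip (e i)‖) + (|W' z (e i)| * ‖W' z‖))) := by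
                rw [habs, habs2, abs_mul]; ring
            _ ≤ rho n z * (M ^ 2 * (‖z‖ / 2) + (M ^ 2 + M ^ 2)) := by
                gcongr
            _ = rho n z * (M ^ 2 * (‖z‖ / 2) + 2 * M ^ 2) := by ring
  
  -- uniform integrable bound
  set C := ((4 * Real.pi) ^ (-(n : ℝ) / 2) * M ^ 2 * 7 * Real.exp 1) with hC
  set G : EuclideanSpace ℝ (Fin n) → ℝ := fun x => C * Real.exp (-(1/16) * ‖x‖ ^ 2) with hG
  have hGint : Integrable G := by
    rw [hG]
    exact (gauss_integrable (by norm_num : (0:ℝ) < 1/16)).const_mul C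
  have hu'' : ∀ (i : Fin n) (z : EuclideanSpace ℝ (Fin n)), |W' z (e i)| ≤ M := by
    intro i z
    calc |W' z (e i)| = ‖W' z (e i)‖ := rfl
      _ ≤ ‖W' z‖ * ‖e i‖ := (W' z).le_opNorm _
      _ = ‖W' z‖ := by rw [hne i, mul_one]
      _ ≤ M := (hM z).2.1
  -- integrability of the components
  have hFi_int : ∀ i : Fin n, Integrable (fun z => w z * (W' z (e i)) * rho n z) := by
    intro i
    apply Integrable.mono' (rho_integrable.const_mul (M^2))
    · exact ((hwcont.mul (hW'cont.clm_apply continuous_const)).mul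
        rho_continuous).aestronglyMeasurable
    · filter_upwards with z
      have h1 := (hM z).1
      have h2 := hu'' i z
      have hρ := (rho_pos z).le
      rw [Real.norm_eq_abs, abs_mul, abs_mul, abs_of_nonneg hρ]
      nlinarith [mul_le_mul_of_nonneg_right
        (mul_le_mul h1 h2 (abs_nonneg _) hM0) hρ]
  have hΦap_int : ∀ i : Fin n, Integrable (fun x => Φ i x (e i)) := by
    intro i
    apply Integrable.mono' hGint
    · have hfun : (fun x => Φ i x (e i)) = fun x =>
          (w x * (W' x (e i))) * (-(rho n x) / 2 * (x i))
            + rho n x * (w x * (W'' x (e i) (e i)) + (W' x (e i)) * (W' x (e i))) :=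
        funext (hΦval i)
      rw [hfun]
      apply Continuous.aestronglyMeasurable
      apply Continuous.add
      · apply Continuous.mul (hwcont.mul (hW'cont.clm_apply continuous_const))
        apply Continuous.mul
        · exact (rho_continuous.neg).div_const 2
        · exact (EuclideanSpace.proj (𝕜 := ℝ) i).continuous
      · apply rho_continuous.mul
        apply Continuous.add
        · exact hwcont.mul ((hW''cont.clm_apply continuous_const).clm_apply continuous_const)
        · exact (hW'cont.clm_apply continuous_const).mul (hW'cont.clm_apply continuous_const)
    · filter_upwards with x
      calc ‖Φ i x (e i)‖ ≤ ‖Φ i x‖ * ‖e i‖ := (Φ i x).le_opNorm _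
        _ = ‖Φ i x‖ := by rw [hne i, mul_one]
        _ ≤ rho n x * (M ^ 2 * (‖x‖ / 2) + 2 * M ^ 2) := hΦnorm i x
        _ ≤ G x := rho_decay_bound M hM0 x x (by simp)
  -- each component integrates to zero
  have hzero : ∀ i : Fin n, ∫ x, Φ i x (e i) = 0 := by
    intro i
    exact integral_fderiv_apply_eq_zero (hΦ i) (e i) (le_of_eq (hne i)) hGint
      (fun x z hz => (hΦnorm i z).trans (rho_decay_bound M hM0 x z hz)) (hFi_int i)
  -- sum of the diagonal derivatives
  have hsum : ∀ y, ∑ i, Φ i y (e i) =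
      ‖W' y‖ ^ 2 * rho n y + w y * lap w y * rho n y
        - (1/2) * w y * (W' y y) * rho n y := by
    intro y
    have h1 : ∑ i, (y i) * W' y (e i) = W' y y := by
      rw [clm_apply_eq_sum (W' y) y]
    have h3 : ∑ i, (W' y (e i))^2 = ‖W' y‖^2 := by
      rw [← sum_sq_apply (W' y)]
    calc ∑ i, Φ i y (e i)
        = ∑ i, ((-(rho n y)/2 * w y) * ((y i) * W' y (e i))
            + (rho n y * w y) * (W'' y (e i) (e i)) + rho n y * (W' y (e i))^2) := by
          apply Finset.sum_congr rfl
          intro i _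
          rw [hΦval i y]
          ring
      _ = (-(rho n y)/2 * w y) * (∑ i, (y i) * W' y (e i))
            + (rho n y * w y) * (∑ i, W'' y (e i) (e i))
            + rho n y * (∑ i, (W' y (e i))^2) := by
          rw [Finset.sum_add_distrib, Finset.sum_add_distrib,
            ← Finset.mul_sum, ← Finset.mul_sum, ← Finset.mul_sum]
      _ = ‖W' y‖ ^ 2 * rho n y + w y * lap w y * rho n y
            - (1/2) * w y * (W' y y) * rho n y := by
          rw [h1, ← hlap y, h3]
          ring
  -- pointwise identity using the equation
  have habs : ∀ y, |w y| ^ (p-1) * w y * w y = |w y| ^ (p+1) := by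
    intro y
    by_cases hw0 : w y = 0
    · rw [hw0]
      simp [Real.zero_rpow (by linarith : p + 1 ≠ 0)]
    · have h1 : 0 < |w y| := abs_pos.mpr hw0
      have h2 : |w y| ^ (p+1) = |w y| ^ (p-1) * |w y| ^ (2:ℝ) := by
        rw [← Real.rpow_add h1]
        congr 1
        ring
      rw [h2, Real.rpow_two]
      have h3 : |w y| ^ 2 = w y * w y := by
        rw [sq, abs_mul_abs_self]
      rw [h3]
      ring
  have hpt : ∀ y, ‖W' y‖ ^ 2 * rho n y + w y * lap w y * rho n y
        - (1/2) * w y * (W' y y) * rho n y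
      = ‖W' y‖ ^ 2 * rho n y + (1/(p-1)) * ((w y)^2 * rho n y)
        - |w y| ^ (p+1) * rho n y := by
    intro y
    have h := heq y
    have hp1 : p - 1 ≠ 0 := by linarith
    have hlapy : lap w y = 1/2 * (W' y y) + w y/(p-1) - |w y|^(p-1) * w y := by
      linarith
    rw [hlapy]
    linear_combination (-(rho n y)) * habs y
  -- integrate everything
  have hS0 : ∫ x, ∑ i, Φ i x (e i) = 0 := by
    rw [integral_finset_sum Finset.univ (fun i _ => hΦap_int i)]
    simp [hzero]
  have hfeq : (fun x => ∑ i, Φ i x (e i))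
      = fun x => ‖W' x‖ ^ 2 * rho n x + (1/(p-1)) * ((w x)^2 * rho n x)
        - |w x| ^ (p+1) * rho n x :=
    funext fun y => (hsum y).trans (hpt y)
  rw [hfeq] at hS0
  have h4 : Integrable (fun x => 1/(p-1) * ((w x)^2 * rho n x)) := hint2.const_mul _
  have h5 : Integrable (fun x => ‖W' x‖ ^ 2 * rho n x + 1/(p-1) * ((w x)^2 * rho n x)) :=
    hint1.add h4
  rw [integral_sub h5 hint3, integral_add hint1 h4, integral_const_mul] at hS0
  linarith
end

section
/- For n ≥ 3 and α ∈ (0, (n-2)/2), the inequality ((n/2) - 1 - α/2)^{1+α} · Γ(n/2 - 1 - α) / Γ(n/2) > 1 holds, where α = 2/(p-1) and p > (n+2)/(n-2). -/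
open Real MeasureTheory Set

/-- Real Beta-Gamma relation. -/
lemma my_real_gamma_beta {a b : ℝ} (ha : 0 < a) (hb : 0 < b) :
    Real.Gamma a * Real.Gamma b
      = Real.Gamma (a + b) * ∫ x in (0:ℝ)..1, x ^ (a-1) * (1-x) ^ (b-1) := by
  have h := Complex.Gamma_mul_Gamma_eq_betaIntegral
    (s := (a:ℂ)) (t := (b:ℂ)) (by simpa using ha) (by simpa using hb)
  have hbeta : Complex.betaIntegral (a:ℂ) (b:ℂ)
      = ((∫ x in (0:ℝ)..1, x ^ (a-1) * (1-x) ^ (b-1) : ℝ) : ℂ) := by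
    rw [Complex.betaIntegral, ← intervalIntegral.integral_ofReal]
    refine intervalIntegral.integral_congr fun x hx => ?_
    rw [Set.uIcc_of_le (by norm_num : (0:ℝ) ≤ 1)] at hx
    have h1 : (0:ℝ) ≤ x := hx.1
    have h2 : (0:ℝ) ≤ 1 - x := by linarith [hx.2]
    rw [Complex.ofReal_mul, Complex.ofReal_cpow h1, Complex.ofReal_cpow h2]
    push_cast
    ring
  rw [hbeta, ← Complex.ofReal_add, Complex.Gamma_ofReal, Complex.Gamma_ofReal,
    Complex.Gamma_ofReal, ← Complex.ofReal_mul, ← Complex.ofReal_mul] at h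
  exact_mod_cast h

lemma my_image_exp_neg : (fun u : ℝ => Real.exp (-u)) '' Set.Ioi 0 = Set.Ioo 0 1 := by
  ext y
  constructor
  · rintro ⟨u, hu, rfl⟩
    refine ⟨Real.exp_pos _, ?_⟩
    rw [← Real.exp_zero]
    exact Real.exp_lt_exp.mpr (by linarith [Set.mem_Ioi.mp hu])
  · intro hy
    refine ⟨-Real.log y, ?_, by simp [Real.exp_log hy.1]⟩
    simpa using Real.log_neg hy.1 hy.2

/-- Change of variables `x = exp (-u)` in the Beta integral. -/
lemma my_beta_subst (a b : ℝ) :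
    ∫ x in Set.Ioo (0:ℝ) 1, x ^ (a-1) * (1-x) ^ (b-1)
      = ∫ u in Set.Ioi (0:ℝ), Real.exp (-(a*u)) * (1 - Real.exp (-u)) ^ (b-1) := by
  have hderiv : ∀ u ∈ Set.Ioi (0:ℝ),
      HasDerivWithinAt (fun u : ℝ => Real.exp (-u)) (Real.exp (-u) * (-1)) (Set.Ioi 0) u :=
    fun u _ => ((Real.hasDerivAt_exp (-u)).comp u (hasDerivAt_neg u)).hasDerivWithinAt
  have hinj : Set.InjOn (fun u : ℝ => Real.exp (-u)) (Set.Ioi 0) := by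
    intro u _ v _ h
    have := Real.exp_eq_exp.mp h
    linarith
  rw [← my_image_exp_neg, integral_image_eq_integral_abs_deriv_smul measurableSet_Ioi hderiv hinj]
  refine setIntegral_congr_fun measurableSet_Ioi fun u _ => ?_
  have he : Real.exp (-u) ^ (a-1) = Real.exp (-u * (a-1)) := by
    rw [Real.rpow_def_of_pos (Real.exp_pos _), Real.log_exp]
  simp only [smul_eq_mul, abs_mul, abs_neg, abs_one, mul_one, abs_of_pos (Real.exp_pos (-u))]
  rw [he, ← mul_assoc, ← Real.exp_add]
  ring_nf

/-- The key pointwise inequality: `u * exp(-u/2) < 1 - exp (-u)` for `u > 0`. -/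
lemma my_pointwise {u : ℝ} (hu : 0 < u) : u * Real.exp (-u/2) < 1 - Real.exp (-u) := by
  have h := (Real.self_lt_sinh_iff).mpr (half_pos hu)
  rw [Real.sinh_eq] at h
  have hE := Real.exp_pos (-u/2)
  have key : u < Real.exp (u/2) - Real.exp (-(u/2)) := by linarith
  have := mul_lt_mul_of_pos_right key hE
  calc u * Real.exp (-u/2)
      < (Real.exp (u/2) - Real.exp (-(u/2))) * Real.exp (-u/2) := this
    _ = 1 - Real.exp (-u) := by
        have e1 : u/2 + -u/2 = 0 := by ring
        have e2 : -(u/2) + -u/2 = -u := by ring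
        rw [sub_mul, ← Real.exp_add, ← Real.exp_add, e1, e2, Real.exp_zero]

/-- For `n ≥ 3`, `p > (n+2)/(n-2)` and `α = 2/(p-1) ∈ (0, (n-2)/2)`, we have
`(n/2 - 1 - α/2)^{1+α} Γ(n/2 - 1 - α) / Γ(n/2) > 1`. -/
theorem gamma_energy_inequality
    (n : ℕ) (hn : 3 ≤ n) (p α : ℝ)
    (hp : ((n : ℝ) + 2) / ((n : ℝ) - 2) < p)
    (hα : α = 2 / (p - 1))
    (hα0 : 0 < α) (hα1 : α < ((n : ℝ) - 2) / 2) :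
    1 < ((n : ℝ) / 2 - 1 - α / 2) ^ (1 + α) *
        Real.Gamma ((n : ℝ) / 2 - 1 - α) / Real.Gamma ((n : ℝ) / 2) := by
  have hn3 : (3:ℝ) ≤ (n:ℝ) := by exact_mod_cast hn
  set a : ℝ := (n:ℝ)/2 - 1 - α with ha_def
  have ha : 0 < a := by simp only [ha_def]; linarith
  set c : ℝ := (n:ℝ)/2 - 1 - α/2 with hc_def
  have hc : 0 < c := by simp only [hc_def]; linarith
  have hca : c = a + α/2 := by simp [ha_def, hc_def]; ring
  -- the two integrands
  set f : ℝ → ℝ := fun u => Real.exp (-(a*u)) * (1 - Real.exp (-u)) ^ α with hf_def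
  set g : ℝ → ℝ := fun u => u ^ α * Real.exp (-(c*u)) with hg_def
  -- integrability of f
  have hf_meas : Measurable f := by
    apply Measurable.mul
    · exact (measurable_id.const_mul a).neg.exp
    · fun_prop
  have hf_int : IntegrableOn f (Set.Ioi 0) := by
    refine Integrable.mono' (exp_neg_integrableOn_Ioi 0 ha) hf_meas.aestronglyMeasurable ?_
    refine (ae_restrict_iff' measurableSet_Ioi).mpr (Filter.Eventually.of_forall fun u hu => ?_)
    have hu' : 0 < u := hu
    have h1 : (0:ℝ) ≤ 1 - Real.exp (-u) := by
      have : Real.exp (-u) ≤ 1 := by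
        rw [← Real.exp_zero]; exact Real.exp_le_exp.mpr (by linarith)
      linarith
    have h2 : (1 - Real.exp (-u)) ^ α ≤ 1 :=
      Real.rpow_le_one h1 (by have := Real.exp_pos (-u); linarith) hα0.le
    have : f u ≤ Real.exp (-(a*u)) := by
      calc f u ≤ Real.exp (-(a*u)) * 1 := by
            exact mul_le_mul_of_nonneg_left h2 (Real.exp_pos _).le
        _ = Real.exp (-(a*u)) := mul_one _
    have hfnn : 0 ≤ f u := mul_nonneg (Real.exp_pos _).le (Real.rpow_nonneg h1 α)
    rw [Real.norm_eq_abs, abs_of_nonneg hfnn]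
    simpa [neg_mul] using this
  -- integrability of g
  have hg_int : IntegrableOn g (Set.Ioi 0) := by
    have := integrableOn_rpow_mul_exp_neg_mul_rpow (by linarith : (-1:ℝ) < α)
      (zero_lt_one' ℝ) hc
    simpa [hg_def, Real.rpow_one, neg_mul] using this
  -- pointwise strict inequality g < f on Ioi 0
  have hgf : ∀ u ∈ Set.Ioi (0:ℝ), g u < f u := by
    intro u hu
    have hu' : (0:ℝ) < u := hu
    have key := my_pointwise hu'
    have hbase : (0:ℝ) ≤ u * Real.exp (-u/2) := by positivity
    have hr := Real.rpow_lt_rpow hbase key hα0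
    have hrw : (u * Real.exp (-u/2)) ^ α = u ^ α * Real.exp (-u/2 * α) := by
      rw [Real.mul_rpow hu'.le (Real.exp_pos _).le,
        Real.rpow_def_of_pos (Real.exp_pos _), Real.log_exp]
    have hlt := mul_lt_mul_of_pos_left hr (Real.exp_pos (-(a*u)))
    have hexp : Real.exp (-(c*u)) = Real.exp (-(a*u)) * Real.exp (-u/2*α) := by
      rw [hca, show -((a+α/2)*u) = -(a*u) + (-u/2*α) by ring, Real.exp_add]
    calc g u = Real.exp (-(a*u)) * ((u * Real.exp (-u/2)) ^ α) := by
          rw [hrw]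
          show u ^ α * Real.exp (-(c*u)) = _
          rw [hexp]; ring
      _ < Real.exp (-(a*u)) * (1 - Real.exp (-u)) ^ α := hlt
      _ = f u := rfl
  -- strict integral inequality
  have hsub_int : IntegrableOn (fun u => f u - g u) (Set.Ioi 0) := hf_int.sub hg_int
  have hpos : 0 < ∫ u in Set.Ioi (0:ℝ), (f u - g u) := by
    rw [setIntegral_pos_iff_support_of_nonneg_ae]
    · have hsupp : Set.Ioi (0:ℝ) ⊆ Function.support (fun u => f u - g u) ∩ Set.Ioi 0 := by
        intro u hu
        refine ⟨?_, hu⟩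
        simp only [Function.mem_support]
        exact sub_ne_zero.mpr (hgf u hu).ne'
      calc (0:ENNReal) < volume (Set.Ioi (0:ℝ)) := by simp [Real.volume_Ioi]
        _ ≤ _ := measure_mono hsupp
    · refine (ae_restrict_iff' measurableSet_Ioi).mpr (Filter.Eventually.of_forall fun u hu => ?_)
      exact sub_nonneg.mpr (hgf u hu).le
    · exact hsub_int
  have hJI : ∫ u in Set.Ioi (0:ℝ), g u < ∫ u in Set.Ioi (0:ℝ), f u := by
    have := integral_sub hf_int hg_int
    rw [this] at hpos
    linarith
  -- evaluate the g-integral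
  have hJ : ∫ u in Set.Ioi (0:ℝ), g u = (1/c) ^ (1+α) * Real.Gamma (1+α) := by
    have := Real.integral_rpow_mul_exp_neg_mul_Ioi (by linarith : (0:ℝ) < 1+α) hc
    simpa [hg_def, add_sub_cancel_left] using this
  -- Beta relation
  have hB := my_real_gamma_beta ha (by linarith : (0:ℝ) < 1+α)
  have hsum : a + (1+α) = (n:ℝ)/2 := by simp only [ha_def]; ring
  have hIB : ∫ x in (0:ℝ)..1, x ^ (a-1) * (1-x) ^ ((1+α)-1)
      = ∫ u in Set.Ioi (0:ℝ), f u := by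
    rw [intervalIntegral.integral_of_le (by norm_num : (0:ℝ) ≤ 1),
      MeasureTheory.integral_Ioc_eq_integral_Ioo, my_beta_subst a (1+α)]
    simp [hf_def, add_sub_cancel_left]
  rw [hsum, hIB] at hB
  -- finish
  set I : ℝ := ∫ u in Set.Ioi (0:ℝ), f u with hI_def
  set J : ℝ := ∫ u in Set.Ioi (0:ℝ), g u with hJ_def
  have hJnn : 0 ≤ J := by
    rw [hJ_def]
    refine setIntegral_nonneg measurableSet_Ioi fun u hu => ?_
    have hu' : (0:ℝ) < u := hu
    positivity
  have hIpos : 0 < I := lt_of_le_of_lt hJnn hJI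
  have hGa : 0 < Real.Gamma a := Real.Gamma_pos_of_pos ha
  have hGn : 0 < Real.Gamma ((n:ℝ)/2) := Real.Gamma_pos_of_pos (by linarith)
  have hcpow : (0:ℝ) < c ^ (1+α) := Real.rpow_pos_of_pos hc _
  -- Γ(n/2) * I = Γ(a) * Γ(1+α) = Γ(a) * c^(1+α) * J < Γ(a) * c^(1+α) * I
  have hGamma1 : Real.Gamma (1+α) = c ^ (1+α) * J := by
    rw [hJ, ← mul_assoc, ← Real.mul_rpow hc.le (by positivity),
      mul_one_div_cancel hc.ne', Real.one_rpow, one_mul]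
  have hkey : Real.Gamma ((n:ℝ)/2) * I < Real.Gamma a * c ^ (1+α) * I := by
    calc Real.Gamma ((n:ℝ)/2) * I = Real.Gamma a * Real.Gamma (1+α) := hB.symm
      _ = Real.Gamma a * c ^ (1+α) * J := by rw [hGamma1]; ring
      _ < Real.Gamma a * c ^ (1+α) * I := by
          exact mul_lt_mul_of_pos_left hJI (by positivity)
  have hfinal : Real.Gamma ((n:ℝ)/2) < c ^ (1+α) * Real.Gamma a := by
    have h2 := (mul_lt_mul_iff_of_pos_right hIpos).mp hkey
    have h3 : Real.Gamma a * c ^ (1+α) = c ^ (1+α) * Real.Gamma a := mul_comm _ _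
    linarith
  rw [lt_div_iff₀ hGn, one_mul]
  exact hfinal
end

section
/- Fix α ∈ (0, ∞) and define φ(x) = log Γ(x - 1 - α) - log Γ(x) + (1+α) log(x - 1 - α/2) for x > 1 + α. Then φ is convex on its domain. -/
/-!
Gauss's limit formula `log Γ(s) = lim (s log n + log n! - ∑_{m ≤ n} log (s + m))` and
`log c = log Γ(c + 1) - log Γ(c)` write the function as `shiftComb α (log ∘ Γ)`, a combination of
four values of `log Γ` in which the terms `s log n` and `log n!` cancel. It is therefore the
pointwise limit of `∑_{m ≤ n} g (x + m)` with `g = shiftComb α (-log)`, and convexity passes to the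
limit. Each `g` is convex: with `a = x - 1 - α`, `p = x - 1 - α/2`, `q = x - α/2`, its second
derivative is `(1 + α) (2x - 1 - α) ((a x)⁻² - (p q)⁻²)`, nonnegative because `a x ≤ p q`.
-/

open Real Set Filter Topology

section Convexity

variable {E : Type*} [AddCommGroup E] [Module ℝ E] {s : Set E}

theorem ConvexOn.fun_sum {ι : Type*} {t : Finset ι} {f : ι → E → ℝ} (hs : Convex ℝ s)
    (h : ∀ i ∈ t, ConvexOn ℝ s (f i)) : ConvexOn ℝ s fun x => ∑ i ∈ t, f i x := by
  classical
  induction t using Finset.induction_on with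
  | empty => simpa using convexOn_const 0 hs
  | insert i t hi ih =>
    simp only [Finset.sum_insert hi]
    exact (h i (Finset.mem_insert_self i t)).add
      (ih fun j hj => h j (Finset.mem_insert_of_mem hj))

theorem ConvexOn.of_tendsto {ι : Type*} {l : Filter ι} [l.NeBot] {F : ι → E → ℝ} {f : E → ℝ}
    (hs : Convex ℝ s) (hF : ∀ᶠ i in l, ConvexOn ℝ s (F i))
    (hlim : ∀ x ∈ s, Tendsto (fun i => F i x) l (𝓝 (f x))) : ConvexOn ℝ s f := by
  refine ⟨hs, fun x hx y hy a b ha hb hab => ?_⟩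
  refine le_of_tendsto_of_tendsto (hlim _ (hs hx hy ha hb hab))
    (((hlim x hx).const_mul a).add ((hlim y hy).const_mul b)) ?_
  filter_upwards [hF] with i hi
  exact hi.2 hx hy ha hb hab

end Convexity

noncomputable def shiftComb (α : ℝ) (f : ℝ → ℝ) (x : ℝ) : ℝ :=
  f (x - 1 - α) - f x + (1 + α) * (f (x - α / 2) - f (x - 1 - α / 2))

section shiftComb

variable {α x : ℝ}

theorem tendsto_shiftComb {ι : Type*} {l : Filter ι} {F : ι → ℝ → ℝ} {f : ℝ → ℝ}
    (hF : ∀ y, 0 < y → Tendsto (fun i => F i y) l (𝓝 (f y))) (hα : 0 ≤ α) (hx : 1 + α < x) :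
    Tendsto (fun i => shiftComb α (F i) x) l (𝓝 (shiftComb α f x)) :=
  ((hF _ (by linarith)).sub (hF _ (by linarith))).add
    (((hF _ (by linarith)).sub (hF _ (by linarith))).const_mul _)

theorem hasDerivAt_shiftComb {f f' : ℝ → ℝ} (hf : ∀ y, 0 < y → HasDerivAt f (f' y) y)
    (hα : 0 ≤ α) (hx : 1 + α < x) : HasDerivAt (shiftComb α f) (shiftComb α f' x) x := by
  have hshift : ∀ c, c < x → HasDerivAt (fun y => f (y - c)) (f' (x - c)) x := fun c hc => by
    simpa using (hf (x - c) (by linarith)).comp_sub_const x c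
  have hfun : shiftComb α f = fun y =>
      f (y - (1 + α)) - f y + (1 + α) * (f (y - α / 2) - f (y - (1 + α / 2))) := by
    funext y
    simp only [shiftComb, sub_sub]
  rw [hfun, shiftComb, sub_sub, sub_sub]
  exact ((hshift _ (by linarith)).fun_sub (hf x (by linarith))).fun_add
    (((hshift _ (by linarith)).fun_sub (hshift _ (by linarith))).const_mul (1 + α))

theorem shiftComb_inv_sq_nonneg (hα : 0 ≤ α) (hx : 1 + α < x) :
    0 ≤ shiftComb α (fun s => (s ^ 2)⁻¹) x := by
  have ha : 0 < x - 1 - α := by linarith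
  have hx0 : 0 < x := by linarith
  have hp : 0 < x - 1 - α / 2 := by linarith
  have hq : 0 < x - α / 2 := by linarith
  have hprod : (x - 1 - α) * x ≤ (x - 1 - α / 2) * (x - α / 2) := by nlinarith
  have hdiff : shiftComb α (fun s => (s ^ 2)⁻¹) x = (1 + α) * (2 * x - 1 - α) *
      ((((x - 1 - α) * x) ^ 2)⁻¹ - (((x - 1 - α / 2) * (x - α / 2)) ^ 2)⁻¹) := by
    unfold shiftComb
    rw [inv_sub_inv (pow_ne_zero 2 ha.ne') (pow_ne_zero 2 hx0.ne'),
      inv_sub_inv (pow_ne_zero 2 hq.ne') (pow_ne_zero 2 hp.ne'), sq_sub_sq, sq_sub_sq]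
    ring
  rw [hdiff]
  refine mul_nonneg (by nlinarith) (sub_nonneg.2 (inv_anti₀ (pow_pos (mul_pos ha hx0) 2) ?_))
  exact pow_le_pow_left₀ (mul_pos ha hx0).le hprod 2

theorem convexOn_shiftComb_neg_log (hα : 0 ≤ α) :
    ConvexOn ℝ (Ioi (1 + α)) (shiftComb α fun s => -log s) := by
  have hf' : ∀ x ∈ Ioi (1 + α),
      HasDerivAt (shiftComb α fun s => -log s) (shiftComb α (fun s => -s⁻¹) x) x :=
    fun x hx => hasDerivAt_shiftComb (fun y hy => (hasDerivAt_log hy.ne').neg) hα hx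
  have hf'' : ∀ x ∈ Ioi (1 + α),
      HasDerivAt (shiftComb α fun s => -s⁻¹) (shiftComb α (fun s => (s ^ 2)⁻¹) x) x :=
    fun x hx => hasDerivAt_shiftComb
      (fun y hy => by simpa using (hasDerivAt_inv hy.ne').fun_neg) hα hx
  refine convexOn_of_hasDerivWithinAt2_nonneg (convex_Ioi _) (f' := shiftComb α fun s => -s⁻¹)
    (f'' := shiftComb α fun s => (s ^ 2)⁻¹)
    (fun x hx => (hf' x hx).continuousAt.continuousWithinAt) ?_ ?_ ?_ <;>
    rw [interior_Ioi]
  exacts [fun x hx => (hf' x hx).hasDerivWithinAt, fun x hx => (hf'' x hx).hasDerivWithinAt,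
    fun x hx => shiftComb_inv_sq_nonneg hα hx]

theorem shiftComb_logGammaSeq (α x : ℝ) (n : ℕ) :
    shiftComb α (fun s => BohrMollerup.logGammaSeq s n) x =
      ∑ m ∈ Finset.range (n + 1), shiftComb α (fun s => -log s) (x + m) := by
  simp only [shiftComb, BohrMollerup.logGammaSeq, Finset.sum_add_distrib, Finset.sum_sub_distrib,
    ← Finset.mul_sum, Finset.sum_neg_distrib]
  ring_nf

theorem convexOn_shiftComb_logGammaSeq (hα : 0 ≤ α) (n : ℕ) :
    ConvexOn ℝ (Ioi (1 + α)) (shiftComb α fun s => BohrMollerup.logGammaSeq s n) := by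
  have hterm (m : ℕ) : ConvexOn ℝ (Ioi (1 + α)) fun x => shiftComb α (fun s => -log s) (x + m) := by
    have hsub : Ioi (1 + α) ⊆ (fun z => (m : ℝ) + z) ⁻¹' Ioi (1 + α) := fun x (hx : 1 + α < x) =>
      show 1 + α < m + x by linarith [m.cast_nonneg (α := ℝ)]
    exact ((convexOn_shiftComb_neg_log hα).translate_right (m : ℝ)).subset hsub (convex_Ioi _)
      |>.congr fun x _ => by simp only [Function.comp_apply, add_comm]
  exact (ConvexOn.fun_sum (convex_Ioi _) fun m _ => hterm m).congr
    fun x _ => (shiftComb_logGammaSeq α x n).symm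

theorem shiftComb_log_Gamma (hα : 0 ≤ α) (hx : 1 + α < x) :
    shiftComb α (fun s => log (Gamma s)) x =
      log (Gamma (x - 1 - α)) - log (Gamma x) + (1 + α) * log (x - 1 - α / 2) := by
  have hp : 0 < x - 1 - α / 2 := by linarith
  have hq : x - α / 2 = x - 1 - α / 2 + 1 := by ring
  rw [shiftComb, hq, Gamma_add_one hp.ne', log_mul hp.ne' (Gamma_pos_of_pos hp).ne']
  ring

end shiftComb

/-- For `α > 0`, the function
`φ(x) = log Γ(x-1-α) - log Γ(x) + (1+α) log(x-1-α/2)` is convex on `(1+α, ∞)`. -/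
theorem logGamma_combination_convex (α : ℝ) (hα : 0 < α) :
    ConvexOn ℝ (Set.Ioi (1 + α)) (fun x : ℝ =>
      Real.log (Real.Gamma (x - 1 - α)) - Real.log (Real.Gamma x)
        + (1 + α) * Real.log (x - 1 - α / 2)) := by
  have hlim : ∀ x ∈ Ioi (1 + α), Tendsto (fun n => shiftComb α (BohrMollerup.logGammaSeq · n) x)
      atTop (𝓝 (shiftComb α (fun s => log (Gamma s)) x)) :=
    fun x hx => tendsto_shiftComb (fun _ hy => BohrMollerup.tendsto_log_gamma hy) hα.le hx
  exact (ConvexOn.of_tendsto (convex_Ioi _)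
    (Eventually.of_forall (convexOn_shiftComb_logGammaSeq hα.le)) hlim).congr
    fun x hx => shiftComb_log_Gamma hα.le hx
end

section
/- Let 1 < p ≤ (n+2)/(n-2), so that the coefficient n/(p+1) + (2-n)/2 is nonnegative. If a bounded smooth Gaussian-integrable solution w of the self-similar equation satisfies the generalized Pohozaev identity (n/(p+1) + (2-n)/2)∫|∇w|²ρ + (1/2)(1/2 - 1/(p+1))∫|y|²|∇w|²ρ = 0, then ∇w ≡ 0 and hence w ∈ {0, κ, -κ}. -/
open MeasureTheory Real

noncomputable def kappa (p : ℝ) : ℝ := (1 / (p - 1)) ^ (1 / (p - 1))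

/-- Giga–Kohn Liouville theorem via the generalized Pohozaev identity: if
`1 < p ≤ (n+2)/(n-2)` and a bounded smooth Gaussian-integrable solution `w`
of the self-similar equation satisfies the Pohozaev identity, then `∇w ≡ 0`
and `w` is one of the constants `0`, `κ`, `-κ`. -/
theorem liouville_from_pohozaev
    (n : ℕ) (hn : 3 ≤ n) (p : ℝ) (hp : 1 < p)
    (hps : p ≤ ((n : ℝ) + 2) / ((n : ℝ) - 2))
    (w : EuclideanSpace ℝ (Fin n) → ℝ)
    (hsmooth : ContDiff ℝ (⊤ : ℕ∞) w)
    (hbd : ∃ M : ℝ, ∀ y, |w y| ≤ M ∧ ‖fderiv ℝ w y‖ ≤ M)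
    (heq : ∀ y, lap w y - (1 / 2) * fderiv ℝ w y y - w y / (p - 1)
        + |w y| ^ (p - 1) * w y = 0)
    (hint1 : Integrable (fun y => ‖fderiv ℝ w y‖ ^ 2 * rho n y))
    (hint2 : Integrable (fun y => ‖y‖ ^ 2 * ‖fderiv ℝ w y‖ ^ 2 * rho n y))
    (hpoh : ((n : ℝ) / (p + 1) + (2 - (n : ℝ)) / 2) *
          (∫ y, ‖fderiv ℝ w y‖ ^ 2 * rho n y)
        + (1 / 2) * (1 / 2 - 1 / (p + 1)) *
          (∫ y, ‖y‖ ^ 2 * ‖fderiv ℝ w y‖ ^ 2 * rho n y) = 0) :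
    (∀ y, fderiv ℝ w y = 0)
    ∧ ∃ c : ℝ, (∀ y, w y = c) ∧ (c = 0 ∨ c = kappa p ∨ c = -kappa p) := by
  -- basic numeric facts
  have hn2 : (2:ℝ) < (n:ℝ) := by
    have : (3:ℝ) ≤ (n:ℝ) := by exact_mod_cast hn
    linarith
  have hp1 : (0:ℝ) < p + 1 := by linarith
  have hpm1 : (0:ℝ) < p - 1 := by linarith
  -- coefficients
  set a : ℝ := (n : ℝ) / (p + 1) + (2 - (n : ℝ)) / 2 with ha_def
  set b : ℝ := (1 / 2) * (1 / 2 - 1 / (p + 1)) with hb_def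
  have hpn : p * ((n:ℝ) - 2) ≤ (n:ℝ) + 2 := (le_div_iff₀ (by linarith)).mp hps
  have ha : 0 ≤ a := by
    have h2 : a = (2 * (n:ℝ) - ((n:ℝ) - 2) * (p + 1)) / (2 * (p + 1)) := by
      rw [ha_def]; field_simp; ring
    rw [h2]
    apply div_nonneg _ (by positivity)
    nlinarith
  have hb : 0 < b := by
    have : (1:ℝ) / (p + 1) < 1 / 2 := by
      rw [div_lt_div_iff₀ hp1 (by norm_num)]; linarith
    rw [hb_def]; nlinarith
  set I1 := ∫ y, ‖fderiv ℝ w y‖ ^ 2 * rho n y with hI1_def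
  set I2 := ∫ y, ‖y‖ ^ 2 * ‖fderiv ℝ w y‖ ^ 2 * rho n y with hI2_def
  have hrho_pos : ∀ y : EuclideanSpace ℝ (Fin n), 0 < rho n y := by
    intro y
    unfold rho
    positivity
  have hI1nn : 0 ≤ I1 := integral_nonneg fun y =>
    mul_nonneg (by positivity) (hrho_pos y).le
  have hI2nn : 0 ≤ I2 := integral_nonneg fun y =>
    mul_nonneg (by positivity) (hrho_pos y).le
  have hbI2 : b * I2 = 0 := by
    have h1 : 0 ≤ a * I1 := mul_nonneg ha hI1nn
    have h2 : 0 ≤ b * I2 := mul_nonneg hb.le hI2nn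
    linarith [hpoh]
  have hI2 : I2 = 0 := by
    rcases mul_eq_zero.mp hbI2 with h | h
    · exact absurd h (ne_of_gt hb)
    · exact h
  -- the nonnegative integrand vanishes a.e., hence everywhere by continuity
  have hnonneg : 0 ≤ fun y : EuclideanSpace ℝ (Fin n) =>
      ‖y‖ ^ 2 * ‖fderiv ℝ w y‖ ^ 2 * rho n y := fun y =>
    mul_nonneg (by positivity) (hrho_pos y).le
  have hae : (fun y : EuclideanSpace ℝ (Fin n) =>
      ‖y‖ ^ 2 * ‖fderiv ℝ w y‖ ^ 2 * rho n y) =ᵐ[volume] 0 :=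
    (integral_eq_zero_iff_of_nonneg hnonneg hint2).mp hI2
  have hcf : Continuous (fderiv ℝ w) := hsmooth.continuous_fderiv (by simp)
  have hcrho : Continuous (rho n) := by
    unfold rho
    exact continuous_const.mul (((continuous_norm.pow 2).neg.div_const 4).rexp)
  have hcont : Continuous (fun y : EuclideanSpace ℝ (Fin n) =>
      ‖y‖ ^ 2 * ‖fderiv ℝ w y‖ ^ 2 * rho n y) :=
    (((continuous_norm.pow 2).mul (hcf.norm.pow 2)).mul hcrho)
  have hallzero : (fun y : EuclideanSpace ℝ (Fin n) =>
      ‖y‖ ^ 2 * ‖fderiv ℝ w y‖ ^ 2 * rho n y) = 0 :=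
    (Continuous.ae_eq_iff_eq volume hcont continuous_const).mp hae
  have hgradne : ∀ y : EuclideanSpace ℝ (Fin n), y ≠ 0 → fderiv ℝ w y = 0 := by
    intro y hy
    have h0 : ‖y‖ ^ 2 * ‖fderiv ℝ w y‖ ^ 2 * rho n y = 0 := congrFun hallzero y
    have hny : (0:ℝ) < ‖y‖ ^ 2 := by
      have : ‖y‖ ≠ 0 := norm_ne_zero_iff.mpr hy
      positivity
    have : ‖fderiv ℝ w y‖ ^ 2 = 0 := by
      have hr := hrho_pos y
      by_contra hne
      have : (0:ℝ) < ‖fderiv ℝ w y‖ ^ 2 :=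
        lt_of_le_of_ne (by positivity) (Ne.symm hne)
      exact absurd h0 (ne_of_gt (mul_pos (mul_pos hny this) hr))
    have : ‖fderiv ℝ w y‖ = 0 := by nlinarith [norm_nonneg (fderiv ℝ w y)]
    exact norm_eq_zero.mp this
  haveI : Nontrivial (EuclideanSpace ℝ (Fin n)) := by
    refine ⟨⟨0, EuclideanSpace.single (⟨0, by omega⟩ : Fin n) 1, ?_⟩⟩
    intro h
    have := congrArg (fun v : EuclideanSpace ℝ (Fin n) => v (⟨0, by omega⟩ : Fin n)) h.symm
    simp [EuclideanSpace.single_apply] at this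
  have hgrad : ∀ y, fderiv ℝ w y = 0 := by
    have := Continuous.ext_on (dense_compl_singleton (0 : EuclideanSpace ℝ (Fin n)))
      hcf continuous_const (fun y hy => hgradne y hy)
    intro y
    exact congrFun this y
  refine ⟨hgrad, w 0, fun y => is_const_of_fderiv_eq_zero
    (hsmooth.differentiable (by simp)) hgrad y 0, ?_⟩
  -- identify the constant
  set c := w 0 with hc_def
  have hlap : lap w 0 = 0 := by
    unfold lap
    have hz : ∀ i : Fin n, (fun z => fderiv ℝ w z (EuclideanSpace.single i 1))
        = fun _ => (0:ℝ) := by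
      intro i
      funext z
      rw [hgrad z]
      rfl
    apply Finset.sum_eq_zero
    intro i _
    rw [hz i, fderiv_const_apply]
    rfl
  have heq0 := heq 0
  rw [hlap, hgrad 0] at heq0
  simp only [ContinuousLinearMap.zero_apply, mul_zero, sub_zero, zero_sub] at heq0
  have hkey : |c| ^ (p - 1) * c = c / (p - 1) := by
    have : -(c / (p - 1)) + |c| ^ (p - 1) * c = 0 := heq0
    linarith
  rcases eq_or_ne c 0 with hc0 | hc0
  · exact Or.inl hc0
  · have hcancel : |c| ^ (p - 1) = 1 / (p - 1) := by
      have h1 : |c| ^ (p - 1) * c = (1 / (p - 1)) * c := by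
        rw [hkey]; ring
      exact mul_right_cancel₀ hc0 h1
    have habs : |c| = kappa p := by
      have h3 : (|c| ^ (p - 1)) ^ ((p - 1)⁻¹) = |c| := by
        rw [← Real.rpow_mul (abs_nonneg c), mul_inv_cancel₀ (ne_of_gt hpm1),
          Real.rpow_one]
      rw [← h3, hcancel]
      simp only [kappa, one_div]
    have hk : 0 ≤ kappa p := by
      rw [← habs]; exact abs_nonneg c
    rcases (abs_eq hk).mp habs with h | h
    · exact Or.inr (Or.inl h)
    · exact Or.inr (Or.inr h)
end
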